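/- arXiv:1002.1933 — 2 statements merged into one kernel-verified Lean document; each statement's English description precedes it below -/
import Mathlib

section
/- The only affine permutation in S̃_n that avoids the pattern 213 is the identity. -/
/-!
Avoiding 213 forces an affine permutation to be increasing: if `i < j` with `ω j < ω i`, then
shifting `j` by a large multiple of the period gives `k > j` with `ω i < ω k`, and `(i, j, k)`
is an occurrence of 213. An increasing bijection of `ℤ` is a translation `i ↦ i + c`, and the
window sum `∑_{i=1}^n (i + c) = binomial(n+1, 2) + n c` forces `c = 0`.
-/

open Function

def Contains213 (ω : ℤ → ℤ) : Prop :=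
  ∃ i₁ i₂ i₃ : ℤ, i₁ < i₂ ∧ i₂ < i₃ ∧ ω i₂ < ω i₁ ∧ ω i₁ < ω i₃

lemma monotone_of_not_contains213 {n : ℤ} (hn : 0 < n) {ω : ℤ → ℤ}
    (hshift : ∀ i, ω (i + n) = ω i + n) (h : ¬ Contains213 ω) : Monotone ω := by
  intro i j hij
  by_contra! hlt
  let g : AddConstMap ℤ ℤ n n := ⟨ω, hshift⟩
  set m := ω i - ω j + 1
  have hm : 0 < m := by omega
  have hk : ω (j + m * n) = ω j + m * n := by
    simpa [g] using AddConstMapClass.map_add_zsmul g j m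
  have hij' : i < j := lt_of_le_of_ne hij (by rintro rfl; exact hlt.false)
  exact h ⟨i, j, j + m * n, hij', by nlinarith, hlt, by nlinarith⟩

lemma Int.eq_add_apply_zero_of_strictMono_of_surjective {f : ℤ → ℤ} (hf : StrictMono f)
    (hsurj : Surjective f) (i : ℤ) : f i = i + f 0 := by
  let g : AddConstMap ℤ ℤ 1 1 :=
    ⟨f, fun x ↦ by simpa [Order.succ_eq_add_one] using (hf.orderIsoOfSurjective f hsurj).map_succ x⟩
  simpa [g, add_comm] using AddConstMapClass.map_zsmul_const g i

lemma Int.sum_Icc_one_id (m : ℕ) : ∑ i ∈ Finset.Icc (1 : ℤ) m, i = ((m + 1).choose 2 : ℤ) := by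
  induction m with
  | zero => simp
  | succ k ih =>
    rw [Nat.cast_succ, ← Finset.insert_Icc_right_eq_Icc_add_one (by omega),
      Finset.sum_insert (by simp), ih, Nat.choose_succ_succ (k + 1) 1]
    push_cast [Nat.choose_one_right]
    ring

theorem avoids_213_iff_id (n : ℕ) (hn : 2 ≤ n) (ω : ℤ → ℤ)
    (hbij : Function.Bijective ω)
    (hshift : ∀ i : ℤ, ω (i + n) = ω i + n)
    (hsum : ∑ i ∈ Finset.Icc (1 : ℤ) (n : ℤ), ω i = ((n + 1).choose 2 : ℤ)) :
    (¬ ∃ i₁ i₂ i₃ : ℤ, i₁ < i₂ ∧ i₂ < i₃ ∧ ω i₂ < ω i₁ ∧ ω i₁ < ω i₃) ↔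
      (∀ i : ℤ, ω i = i) := by
  constructor
  · intro havoid
    have hmono : StrictMono ω :=
      (monotone_of_not_contains213 (by omega) hshift havoid).strictMono_of_injective hbij.1
    have htrans := Int.eq_add_apply_zero_of_strictMono_of_surjective hmono hbij.2
    have hwindow : ∑ i ∈ Finset.Icc (1 : ℤ) n, ω i = (n + 1).choose 2 + n * ω 0 := by
      rw [Finset.sum_congr rfl fun i _ ↦ htrans i, Finset.sum_add_distrib, Int.sum_Icc_one_id]
      simp
    have hzero : ω 0 = 0 := by
      have : (n : ℤ) * ω 0 = 0 := by omega
      simpa [show n ≠ 0 by omega] using this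
    simpa [hzero] using htrans
  · rintro hid ⟨i₁, i₂, -, h12, -, h21, -⟩
    rw [hid, hid] at h21
    exact lt_asymm h12 h21
end

section
/- An affine permutation ω ∈ S̃_n avoids the pattern 231 if and only if it avoids the pattern 1342. -/
/-! A 1342 pattern contains a 231 pattern in its last three positions. Conversely, the
quasi-periodicity `ω (i + n) = ω i + n` lets one go far enough to the left of any 231
occurrence to find a value below all three, which completes it to a 1342. -/

theorem periodic_sub_id_of_map_add {n : ℤ} {ω : ℤ → ℤ}
    (hshift : ∀ i, ω (i + n) = ω i + n) : Function.Periodic (fun i ↦ ω i - i) n := fun i ↦ by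
  simp only [hshift]
  ring

theorem exists_lt_and_lt_of_map_add {n : ℤ} (hn : 0 < n) {ω : ℤ → ℤ}
    (hshift : ∀ i, ω (i + n) = ω i + n) (a v : ℤ) : ∃ j < a, ω j < v := by
  set m := |ω a - v| + 1
  have hm : ω a - v < m := by linarith [le_abs_self (ω a - v)]
  have hm_pos : 0 < m := by positivity
  have hj : ω (a - m * n) - (a - m * n) = ω a - a :=
    (periodic_sub_id_of_map_add hshift).sub_int_mul_eq m
  refine ⟨a - m * n, by nlinarith, ?_⟩
  nlinarith

theorem avoids_231_iff_avoids_1342_general (n : ℕ) (hn : 2 ≤ n) (ω : ℤ → ℤ)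
    (hshift : ∀ i : ℤ, ω (i + n) = ω i + n) :
    (¬ ∃ i₁ i₂ i₃ : ℤ, i₁ < i₂ ∧ i₂ < i₃ ∧ ω i₃ < ω i₁ ∧ ω i₁ < ω i₂) ↔
      (¬ ∃ i₁ i₂ i₃ i₄ : ℤ, i₁ < i₂ ∧ i₂ < i₃ ∧ i₃ < i₄ ∧
        ω i₁ < ω i₄ ∧ ω i₄ < ω i₂ ∧ ω i₂ < ω i₃) := by
  refine not_congr ⟨?_, ?_⟩
  · rintro ⟨b, c, d, hbc, hcd, hdb, hbc'⟩
    obtain ⟨a, hab, had⟩ := exists_lt_and_lt_of_map_add (by omega) hshift b (ω d)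
    exact ⟨a, b, c, d, hab, hbc, hcd, had, hdb, hbc'⟩
  · rintro ⟨-, b, c, d, -, hbc, hcd, -, hdb, hbc'⟩
    exact ⟨b, c, d, hbc, hcd, hdb, hbc'⟩

theorem avoids_231_iff_avoids_1342 (n : ℕ) (hn : 2 ≤ n) (ω : ℤ → ℤ)
    (hbij : Function.Bijective ω)
    (hshift : ∀ i : ℤ, ω (i + n) = ω i + n)
    (hsum : ∑ i ∈ Finset.Icc (1 : ℤ) (n : ℤ), ω i = ((n + 1).choose 2 : ℤ)) :
    (¬ ∃ i₁ i₂ i₃ : ℤ, i₁ < i₂ ∧ i₂ < i₃ ∧ ω i₃ < ω i₁ ∧ ω i₁ < ω i₂) ↔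
      (¬ ∃ i₁ i₂ i₃ i₄ : ℤ, i₁ < i₂ ∧ i₂ < i₃ ∧ i₃ < i₄ ∧
        ω i₁ < ω i₄ ∧ ω i₄ < ω i₂ ∧ ω i₂ < ω i₃) :=
  avoids_231_iff_avoids_1342_general n hn ω hshift
end
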